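/- CCC special case (Remark 2, r = 0, single path, p = q): Let p ≥ 2 and F_β^α(x_0,…,x_{n-1}) = ∑_{i=1}^{n-1} x_{π(i-1)}x_{π(i)} + ∑γ_i x_i + θ + αx_{π(0)} + βx_{π(n-1)} over ℤ_p. Then the p codes C_α = [χ(F_0^α);…;χ(F_{p-1}^α)], 0 ≤ α < p, form a (p, p, p^n)-CCC: for all α^1, α^2 and all shifts τ with 0 < |τ| < p^n, ∑_{β=0}^{p-1} C_{χ(F_β^{α^1}), χ(F_β^{α^2})}(τ) = 0, and for α^1 ≠ α^2 also ∑_{β=0}^{p-1} C_{χ(F_β^{α^1}), χ(F_β^{α^2})}(0) = 0, while for α^1 = α^2 the zero-shift sum equals p·p^n. -/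

import Mathlib

/-!
Write `A_β^α(z) = ∑_I χ(F_β^α)_I z^I`. Listing the digits of `I` in the order of the path `π`,
`A_β^α(z) = ζ_p^θ (F D_0 F D_1 ⋯ D_{n-1} F)_{αβ}`, where `F = (ζ_p^{xy})` is the DFT matrix and
the `D_u` are unitary diagonal matrices collecting the linear terms and the powers of `z`. Since
`F Fᴴ = p • 1`, this product `P` satisfies `P Pᴴ = p^{n+1} • 1`, i.e.
`∑_β A_β^{α₁}(z) conj (A_β^{α₂}(z)) = p^{n+1} δ_{α₁α₂}` for every `z` on the unit circle.
Evaluating at the `2p^n`-th roots of unity and inverting the discrete Fourier transform turns this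
into the correlation sums: `p^{n+1} δ_{α₁α₂}` at `τ = 0` and `0` at every other shift.
-/

/-- `ζ_q^e` for an integer exponent `e`. -/
noncomputable def zeta (q : ℕ) (e : ℤ) : ℂ :=
  Complex.exp (2 * Real.pi * Complex.I * (e : ℂ) / (q : ℂ))

/-- the `i`-th base-`p` digit of `I`, for vectors of length `m`. -/
def dgt (p m i I : ℕ) : ℕ := I / p ^ (m - 1 - i) % p

/-- Aperiodic cross-correlation of sequences `a, b` of length `N` at integer shift `τ`. -/
noncomputable def accs (N : ℕ) (a b : ℕ → ℂ) (τ : ℤ) : ℂ :=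
  if 0 ≤ τ ∧ τ < (N : ℤ) then
    ∑ i ∈ Finset.range (N - τ.toNat), a (i + τ.toNat) * (starRingEnd ℂ) (b i)
  else if -(N : ℤ) < τ ∧ τ < 0 then
    ∑ i ∈ Finset.range (N - (-τ).toNat), a i * (starRingEnd ℂ) (b (i + (-τ).toNat))
  else 0

/-- `F_β^α(x) = ∑_{i=1}^{n-1} x_{π(i-1)}x_{π(i)} + ∑ γ_i x_i + θ + αx_{π(0)} + βx_{π(n-1)}`
over `ℤ_p`, evaluated at the base-`p` digit vector of `I`. -/
def Gval (p n : ℕ) (hn : 1 ≤ n) (π : Equiv.Perm (Fin n)) (γ : Fin n → ℕ) (θ : ℕ)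
    (α β I : ℕ) : ℤ :=
  (∑ i : Fin n, if h : 1 ≤ (i : ℕ) then
      (dgt p n (π ⟨(i : ℕ) - 1, by omega⟩) I : ℤ) * (dgt p n (π i) I : ℤ) else 0)
  + ∑ i : Fin n, (γ i : ℤ) * (dgt p n i I : ℤ) + (θ : ℤ)
  + (α : ℤ) * (dgt p n (π ⟨0, by omega⟩) I : ℤ)
  + (β : ℤ) * (dgt p n (π ⟨n - 1, by omega⟩) I : ℤ)

open Finset Matrix

lemma zeta_add (q : ℕ) (e f : ℤ) : zeta q (e + f) = zeta q e * zeta q f := by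
  rw [zeta, zeta, zeta, ← Complex.exp_add]
  push_cast
  ring_nf

lemma zeta_zero (q : ℕ) : zeta q 0 = 1 := by
  simp [zeta]

lemma zeta_sum {ι : Type*} (q : ℕ) (s : Finset ι) (f : ι → ℤ) :
    zeta q (∑ i ∈ s, f i) = ∏ i ∈ s, zeta q (f i) := by
  classical
  induction s using Finset.induction_on with
  | empty => simp [zeta_zero]
  | insert i s hi ih => rw [sum_insert hi, prod_insert hi, zeta_add, ih]

lemma conj_zeta (q : ℕ) (e : ℤ) : starRingEnd ℂ (zeta q e) = zeta q (-e) := by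
  rw [zeta, zeta, ← Complex.exp_conj]
  simp only [map_div₀, map_mul, map_ofNat, Complex.conj_ofReal, Complex.conj_I,
    map_intCast, map_natCast]
  push_cast
  ring_nf

lemma zeta_mul_conj (q : ℕ) (e : ℤ) : zeta q e * starRingEnd ℂ (zeta q e) = 1 := by
  rw [conj_zeta, ← zeta_add, add_neg_cancel, zeta_zero]

lemma zeta_natCast_mul (q k : ℕ) (e : ℤ) : zeta q (k * e) = zeta q e ^ k := by
  rw [zeta, zeta, ← Complex.exp_nat_mul]
  push_cast
  ring_nf

lemma zeta_self_mul (q : ℕ) (hq : q ≠ 0) (e : ℤ) : zeta q (q * e) = 1 := by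
  rw [zeta, ← Complex.exp_int_mul_two_pi_mul_I e]
  congr 1
  push_cast
  field_simp

lemma zeta_ne_one (q : ℕ) (d : ℤ) (hd0 : d ≠ 0) (hd : |d| < q) : zeta q d ≠ 1 := by
  have hq : (q : ℂ) ≠ 0 := by
    have := abs_nonneg d
    exact_mod_cast (show q ≠ 0 by omega)
  intro h
  obtain ⟨k, hk⟩ := Complex.exp_eq_one_iff.mp h
  have hdk : d = k * q := by
    have : (d : ℂ) = k * q := by
      field_simp at hk
      linear_combination hk
    exact_mod_cast this
  exact hd0 (Int.eq_zero_of_abs_lt_dvd ⟨k, by rw [hdk, mul_comm]⟩ hd)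

lemma sum_range_zeta_mul (q : ℕ) (d : ℤ) (hd : |d| < q) :
    ∑ k ∈ range q, zeta q (k * d) = if d = 0 then (q : ℂ) else 0 := by
  split_ifs with h
  · simp [h, zeta_zero]
  · have hq : q ≠ 0 := by have := abs_nonneg d; omega
    simp_rw [zeta_natCast_mul]
    rw [geom_sum_eq (zeta_ne_one q d h hd), ← zeta_natCast_mul, zeta_self_mul q hq, sub_self,
      zero_div]

lemma sum_range_sum_range_ite_eq_add {M : Type*} [AddCommMonoid M] (N t : ℕ) (f : ℕ → ℕ → M) :
    ∑ j ∈ range N, ∑ i ∈ range N, (if i = j + t then f i j else 0) =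
      ∑ j ∈ range (N - t), f (j + t) j := by
  simp_rw [sum_ite_eq', mem_range, ← sum_filter]
  congr 1
  ext j
  simp only [mem_filter, mem_range]
  omega

lemma accs_eq_sum_sum_ite (N : ℕ) (a b : ℕ → ℂ) (τ : ℤ) (hτ : |τ| < N) :
    accs N a b τ = ∑ i ∈ range N, ∑ j ∈ range N,
      if (i : ℤ) - j = τ then a i * starRingEnd ℂ (b j) else 0 := by
  rw [abs_lt] at hτ
  rcases le_or_gt 0 τ with h0 | h0
  · obtain ⟨t, rfl⟩ := Int.eq_ofNat_of_zero_le h0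
    have hshift : ∀ i j : ℕ, (i : ℤ) - j = t ↔ i = j + t := by omega
    simp_rw [accs, if_pos (And.intro h0 hτ.2), hshift, Int.toNat_natCast]
    rw [sum_comm, sum_range_sum_range_ite_eq_add]
  · obtain ⟨t, ht⟩ := Int.exists_eq_neg_ofNat h0.le
    have hshift : ∀ i j : ℕ, (i : ℤ) - j = τ ↔ j = i + t := by omega
    simp_rw [accs, if_neg (not_and_of_not_left _ h0.not_ge), if_pos (And.intro hτ.1 h0),
      hshift, ht, neg_neg, Int.toNat_natCast]
    rw [sum_range_sum_range_ite_eq_add]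

/-- Sampling at the `2N`-th rather than the `N`-th roots of unity separates all shifts
`|τ| < N`. -/
noncomputable def oversampledDFT (N : ℕ) (a : ℕ → ℂ) (K : ℕ) : ℂ :=
  ∑ i ∈ range N, a i * zeta (2 * N) (K * i)

lemma natCast_mul_accs_eq_sum_oversampledDFT (N : ℕ) (a b : ℕ → ℂ) (τ : ℤ) (hτ : |τ| < N) :
    ((2 * N : ℕ) : ℂ) * accs N a b τ = ∑ K ∈ range (2 * N),
      oversampledDFT N a K * starRingEnd ℂ (oversampledDFT N b K) * zeta (2 * N) (K * -τ) := by
  have hdelta : ∀ i ∈ range N, ∀ j ∈ range N,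
      ((2 * N : ℕ) : ℂ) * (if (i : ℤ) - j = τ then a i * starRingEnd ℂ (b j) else 0) =
        ∑ K ∈ range (2 * N), a i * starRingEnd ℂ (b j) * zeta (2 * N) (K * (i - j - τ)) := by
    intro i hi j hj
    rw [mem_range] at hi hj
    rw [← mul_sum, sum_range_zeta_mul _ _ (by push_cast; rw [abs_lt] at hτ ⊢; omega)]
    simp only [sub_eq_zero]
    split_ifs <;> ring
  calc ((2 * N : ℕ) : ℂ) * accs N a b τ
      = ∑ i ∈ range N, ∑ j ∈ range N, ∑ K ∈ range (2 * N),
          a i * starRingEnd ℂ (b j) * zeta (2 * N) (K * (i - j - τ)) := by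
        rw [accs_eq_sum_sum_ite N a b τ hτ, mul_sum]
        exact sum_congr rfl fun i hi => by rw [mul_sum]; exact sum_congr rfl (hdelta i hi)
    _ = ∑ K ∈ range (2 * N), ∑ i ∈ range N, ∑ j ∈ range N,
          a i * starRingEnd ℂ (b j) * zeta (2 * N) (K * (i - j - τ)) :=
        (sum_congr rfl fun _ _ => sum_comm).trans sum_comm
    _ = _ := by
        refine sum_congr rfl fun K _ => ?_
        simp_rw [oversampledDFT, map_sum, sum_mul_sum, sum_mul]
        refine sum_congr rfl fun i _ => sum_congr rfl fun j _ => ?_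
        rw [map_mul, conj_zeta, show (K : ℤ) * (i - j - τ) = K * i + -(K * j) + K * -τ by ring,
          zeta_add, zeta_add]
        ring

lemma sum_accs_eq_ite_of_sum_oversampledDFT_eq {ι : Type*} (s : Finset ι) (N : ℕ)
    (a b : ι → ℕ → ℂ) (c : ℂ)
    (h : ∀ K, ∑ β ∈ s, oversampledDFT N (a β) K * starRingEnd ℂ (oversampledDFT N (b β) K) = c)
    (τ : ℤ) (hτ : |τ| < N) :
    ∑ β ∈ s, accs N (a β) (b β) τ = if τ = 0 then c else 0 := by
  have hN : ((2 * N : ℕ) : ℂ) ≠ 0 := by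
    have := abs_nonneg τ
    exact_mod_cast (show 2 * N ≠ 0 by omega)
  apply mul_left_cancel₀ hN
  calc ((2 * N : ℕ) : ℂ) * ∑ β ∈ s, accs N (a β) (b β) τ
      = ∑ K ∈ range (2 * N), c * zeta (2 * N) (K * -τ) := by
        simp_rw [mul_sum, natCast_mul_accs_eq_sum_oversampledDFT N _ _ τ hτ]
        rw [sum_comm]
        simp_rw [← sum_mul, h]
    _ = _ := by
        rw [← mul_sum, sum_range_zeta_mul _ _ (by push_cast; rw [abs_neg]; omega)]
        simp only [neg_eq_zero]
        split_ifs <;> ring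

def pathMatrix {ι R : Type*} [Fintype ι] [DecidableEq ι] [Semiring R] (F : Matrix ι ι R) :
    (n : ℕ) → (Fin n → ι → R) → Matrix ι ι R
  | 0, _ => F
  | n + 1, φ => F * diagonal (φ 0) * pathMatrix F n (Fin.tail φ)

lemma pathMatrix_mul_conjTranspose {ι R : Type*} [Fintype ι] [DecidableEq ι] [CommRing R]
    [StarRing R] (F : Matrix ι ι R) (c : R) (hF : F * Fᴴ = c • 1) :
    ∀ (n : ℕ) (φ : Fin n → ι → R), (∀ u i, φ u i * star (φ u i) = 1) →
      pathMatrix F n φ * (pathMatrix F n φ)ᴴ = c ^ (n + 1) • 1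
  | 0, _, _ => by simpa [pathMatrix] using hF
  | n + 1, φ, hφ => by
    have hD : diagonal (φ 0) * (diagonal (φ 0))ᴴ = 1 := by
      rw [diagonal_conjTranspose, diagonal_mul_diagonal, ← diagonal_one]
      exact congrArg diagonal (funext (hφ 0))
    have ih := pathMatrix_mul_conjTranspose F c hF n (Fin.tail φ) fun u => hφ u.succ
    simp only [pathMatrix, conjTranspose_mul, Matrix.mul_assoc]
    rw [← Matrix.mul_assoc (pathMatrix F n _), ih, Matrix.smul_mul, Matrix.one_mul, Matrix.mul_smul,
      ← Matrix.mul_assoc, hD, Matrix.one_mul, Matrix.mul_smul, hF, smul_smul,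
      ← pow_succ]

noncomputable def dftMatrix (p : ℕ) : Matrix (Fin p) (Fin p) ℂ :=
  of fun x y => zeta p ((x : ℕ) * (y : ℕ))

lemma dftMatrix_mul_conjTranspose (p : ℕ) : dftMatrix p * (dftMatrix p)ᴴ = (p : ℂ) • 1 := by
  ext x y
  have hxy : |((x : ℕ) : ℤ) - (y : ℕ)| < p := by rw [abs_lt]; omega
  simp only [mul_apply, conjTranspose_apply, dftMatrix, of_apply, RCLike.star_def, conj_zeta,
    ← zeta_add, Matrix.smul_apply, one_apply]
  rw [Fin.sum_univ_eq_sum_range (fun k : ℕ => zeta p (x * k + -(y * k)))]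
  simp_rw [show ∀ k : ℕ, ((x : ℕ) : ℤ) * k + -((y : ℕ) * k) = k * ((x : ℕ) - (y : ℕ)) by
    intro k; ring]
  rw [sum_range_zeta_mul p _ hxy]
  simp only [sub_eq_zero, Nat.cast_inj, ← Fin.ext_iff]
  split_ifs <;> simp

def pathForm {p m : ℕ} (w : Fin (m + 1) → Fin p) : ℤ :=
  ∑ i : Fin m, ((w i.castSucc : ℕ) : ℤ) * (w i.succ : ℕ)

lemma pathForm_cons {p m : ℕ} (y : Fin p) (w : Fin (m + 1) → Fin p) :
    pathForm (Fin.cons y w : Fin (m + 2) → Fin p) = (y : ℕ) * (w 0 : ℕ) + pathForm w := by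
  simp [pathForm, Fin.sum_univ_succ]

lemma sum_fun_fin_succ {α M : Type*} [Fintype α] [AddCommMonoid M] {m : ℕ}
    (f : (Fin (m + 1) → α) → M) :
    ∑ w, f w = ∑ y, ∑ w, f (Fin.cons y w) := by
  rw [← (Fin.consEquiv fun _ => α).sum_comp, Fintype.sum_prod_type]
  rfl

lemma mul_diagonal_mul_apply {ι R : Type*} [Fintype ι] [DecidableEq ι] [Semiring R]
    (A B : Matrix ι ι R) (d : ι → R) (i j : ι) :
    (A * diagonal d * B) i j = ∑ k, A i k * d k * B k j := by
  simp only [mul_apply (M := A * diagonal d), mul_diagonal]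

lemma pathMatrix_dftMatrix_apply (p : ℕ) :
    ∀ (m : ℕ) (φ : Fin (m + 1) → Fin p → ℂ) (α β : Fin p),
      pathMatrix (dftMatrix p) (m + 1) φ α β = ∑ w : Fin (m + 1) → Fin p,
        zeta p ((α : ℕ) * (w 0 : ℕ) + pathForm w + (w (Fin.last m) : ℕ) * (β : ℕ)) *
          ∏ u, φ u (w u)
  | 0, φ, α, β => by
    rw [pathMatrix, mul_diagonal_mul_apply, ← (Equiv.funUnique (Fin 1) (Fin p)).symm.sum_comp]
    refine sum_congr rfl fun y _ => ?_
    simp only [dftMatrix, of_apply, pathMatrix, Equiv.funUnique_symm_apply, uniqueElim_const,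
      pathForm, univ_eq_empty, sum_const, card_empty, zero_nsmul, add_zero, Fin.last_zero,
      zeta_add, Nat.reduceAdd, univ_unique, Fin.default_eq_zero, prod_singleton]
    ring
  | m + 1, φ, α, β => by
    rw [sum_fun_fin_succ, pathMatrix, mul_diagonal_mul_apply]
    refine sum_congr rfl fun y _ => ?_
    rw [pathMatrix_dftMatrix_apply p m, mul_sum]
    refine sum_congr rfl fun w _ => ?_
    simp only [pathForm_cons, Fin.prod_univ_succ, Fin.cons_zero, Fin.cons_succ, Fin.tail,
      Fin.cons_last, zeta_add, dftMatrix, of_apply]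
    ring

/-- The index `I < p ^ n` whose digit vector `x` satisfies `x (π u) = w u`: `w` lists the digits
of `I` in the order in which the path `π` visits them. -/
def pathIndex {p n : ℕ} (π : Equiv.Perm (Fin n)) (w : Fin n → Fin p) : ℕ :=
  finFunctionFinEquiv fun i => w ((π.trans Fin.revPerm).symm i)

lemma sum_range_pow_eq_sum_pathIndex {M : Type*} [AddCommMonoid M] {p n : ℕ}
    (π : Equiv.Perm (Fin n)) (f : ℕ → M) :
    ∑ I ∈ range (p ^ n), f I = ∑ w : Fin n → Fin p, f (pathIndex π w) := by
  rw [← Fin.sum_univ_eq_sum_range, ← finFunctionFinEquiv.sum_comp,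
    ← ((π.trans Fin.revPerm).arrowCongr (Equiv.refl (Fin p))).sum_comp]
  rfl

lemma dgt_pathIndex {p n : ℕ} (π : Equiv.Perm (Fin n)) (w : Fin n → Fin p) (u : Fin n) :
    dgt p n (π u) (pathIndex π w) = w u := by
  have h := finFunctionFinEquiv_symm_apply_val (finFunctionFinEquiv
    fun i => w ((π.trans Fin.revPerm).symm i)) (Fin.rev (π u))
  rw [Equiv.symm_apply_apply, show Fin.rev (π u) = π.trans Fin.revPerm u from rfl,
    Equiv.symm_apply_apply, Equiv.trans_apply, Fin.revPerm_apply, Fin.val_rev] at h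
  rw [dgt, pathIndex, h, show n - 1 - (π u : ℕ) = n - (π u + 1) by omega]

lemma pathIndex_eq_sum {p n : ℕ} (π : Equiv.Perm (Fin n)) (w : Fin n → Fin p) :
    pathIndex π w = ∑ u, (w u : ℕ) * p ^ (n - 1 - (π u : ℕ)) := by
  rw [pathIndex, finFunctionFinEquiv_apply, ← (π.trans Fin.revPerm).sum_comp]
  refine sum_congr rfl fun u _ => ?_
  rw [Equiv.symm_apply_apply, Equiv.trans_apply, Fin.revPerm_apply, Fin.val_rev,
    show n - (π u + 1) = n - 1 - (π u : ℕ) by omega]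

section Gval

variable (p m : ℕ) (hn : 1 ≤ m + 1) (π : Equiv.Perm (Fin (m + 1))) (γ : Fin (m + 1) → ℕ) (θ : ℕ)

lemma Gval_pathIndex (α β : ℕ) (w : Fin (m + 1) → Fin p) :
    Gval p (m + 1) hn π γ θ α β (pathIndex π w) =
      pathForm w + ∑ u, (γ (π u) : ℤ) * (w u : ℕ) + θ + α * (w 0 : ℕ) +
        β * (w (Fin.last m) : ℕ) := by
  have hpath : (∑ i : Fin (m + 1), if h : 1 ≤ (i : ℕ) then
      (dgt p (m + 1) (π ⟨(i : ℕ) - 1, by omega⟩) (pathIndex π w) : ℤ) *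
        (dgt p (m + 1) (π i) (pathIndex π w) : ℤ) else 0) = pathForm w := by
    simp only [dgt_pathIndex, Fin.sum_univ_succ, Fin.coe_ofNat_eq_mod, Nat.zero_mod,
      nonpos_iff_eq_zero, one_ne_zero, ↓reduceDIte, Fin.val_succ, le_add_iff_nonneg_left, zero_le,
      add_tsub_cancel_right, zero_add, pathForm]
    rfl
  have hlin : ∑ i, (γ i : ℤ) * (dgt p (m + 1) i (pathIndex π w) : ℤ) =
      ∑ u, (γ (π u) : ℤ) * (w u : ℕ) := by
    rw [← Equiv.sum_comp π]
    simp only [dgt_pathIndex]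
  rw [Gval, hpath, hlin]
  simp [dgt_pathIndex, Fin.last]

/-- The factor of `A(ζ_{2p^{m+1}}^K)` contributed by the digit `y` in position `π u`: its linear
term `γ (π u) * y` and its place value `p ^ (m - π u)`. -/
noncomputable def digitWeight (K : ℕ) (u : Fin (m + 1)) (y : Fin p) : ℂ :=
  zeta p (γ (π u) * (y : ℕ)) * zeta (2 * p ^ (m + 1)) (K * p ^ (m - π u) * (y : ℕ))

lemma oversampledDFT_Gval (α β : Fin p) (K : ℕ) :
    oversampledDFT (p ^ (m + 1)) (fun I => zeta p (Gval p (m + 1) hn π γ θ α β I)) K =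
      zeta p θ * pathMatrix (dftMatrix p) (m + 1) (digitWeight p m π γ K) α β := by
  rw [oversampledDFT, sum_range_pow_eq_sum_pathIndex π, pathMatrix_dftMatrix_apply, mul_sum]
  refine sum_congr rfl fun w _ => ?_
  unfold digitWeight
  rw [Gval_pathIndex, pathIndex_eq_sum, prod_mul_distrib, ← zeta_sum, ← zeta_sum]
  have hK : (K : ℤ) * ((∑ u, (w u : ℕ) * p ^ (m + 1 - 1 - (π u : ℕ)) : ℕ) : ℤ) =
      ∑ u, (K : ℤ) * (p : ℤ) ^ (m - (π u : ℕ)) * ((w u : ℕ) : ℤ) := by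
    push_cast
    rw [mul_sum]
    exact sum_congr rfl fun u _ => by ring
  rw [hK, mul_comm ((w (Fin.last m) : ℕ) : ℤ)]
  simp only [zeta_add]
  ring

lemma sum_oversampledDFT_Gval_mul_conj (α1 α2 : Fin p) (K : ℕ) :
    ∑ β ∈ range p,
      oversampledDFT (p ^ (m + 1)) (fun I => zeta p (Gval p (m + 1) hn π γ θ α1 β I)) K *
        starRingEnd ℂ
          (oversampledDFT (p ^ (m + 1)) (fun I => zeta p (Gval p (m + 1) hn π γ θ α2 β I)) K) =
      if α1 = α2 then (p : ℂ) ^ (m + 2) else 0 := by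
  set P := pathMatrix (dftMatrix p) (m + 1) (digitWeight p m π γ K)
  have hP : P * Pᴴ = (p : ℂ) ^ (m + 2) • 1 :=
    pathMatrix_mul_conjTranspose _ _ (dftMatrix_mul_conjTranspose p) _ _ fun u y => by
      rw [digitWeight, RCLike.star_def, map_mul, mul_mul_mul_comm, zeta_mul_conj, zeta_mul_conj,
        one_mul]
  calc _ = ∑ β, P α1 β * star (P α2 β) := by
        rw [sum_range]
        refine sum_congr rfl fun β _ => ?_
        rw [oversampledDFT_Gval, oversampledDFT_Gval, map_mul, mul_mul_mul_comm, zeta_mul_conj,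
          one_mul]
        rfl
    _ = ((p : ℂ) ^ (m + 2) • (1 : Matrix (Fin p) (Fin p) ℂ)) α1 α2 := by
        rw [← hP, mul_apply]
        rfl
    _ = _ := by simp [one_apply]

end Gval

theorem stmt_13_general (p n : ℕ) (hn : 1 ≤ n)
    (π : Equiv.Perm (Fin n)) (γ : Fin n → ℕ) (θ : ℕ) :
    ∀ α1 < p, ∀ α2 < p,
      (∀ τ : ℤ, 0 < |τ| → |τ| < (p ^ n : ℤ) →
        ∑ β ∈ Finset.range p,
          accs (p ^ n)
            (fun I => zeta p (Gval p n hn π γ θ α1 β I))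
            (fun I => zeta p (Gval p n hn π γ θ α2 β I)) τ = 0) ∧
      (α1 ≠ α2 →
        ∑ β ∈ Finset.range p,
          accs (p ^ n)
            (fun I => zeta p (Gval p n hn π γ θ α1 β I))
            (fun I => zeta p (Gval p n hn π γ θ α2 β I)) 0 = 0) ∧
      (α1 = α2 →
        ∑ β ∈ Finset.range p,
          accs (p ^ n)
            (fun I => zeta p (Gval p n hn π γ θ α1 β I))
            (fun I => zeta p (Gval p n hn π γ θ α2 β I)) 0 = (p : ℂ) * (p : ℂ) ^ n) := by
  obtain ⟨m, rfl⟩ : ∃ m, n = m + 1 := ⟨n - 1, by omega⟩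
  intro α1 hα1 α2 hα2
  have hcorr : ∀ τ : ℤ, |τ| < (p ^ (m + 1) : ℕ) →
      ∑ β ∈ range p, accs (p ^ (m + 1))
        (fun I => zeta p (Gval p (m + 1) hn π γ θ α1 β I))
        (fun I => zeta p (Gval p (m + 1) hn π γ θ α2 β I)) τ =
      if τ = 0 then (if α1 = α2 then (p : ℂ) ^ (m + 2) else 0) else 0 := fun τ hτ => by
    refine sum_accs_eq_ite_of_sum_oversampledDFT_eq _ _ _ _ _ (fun K => ?_) τ hτ
    simpa [Fin.ext_iff] using sum_oversampledDFT_Gval_mul_conj p m hn π γ θ ⟨α1, hα1⟩ ⟨α2, hα2⟩ K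
  have hpos : |(0 : ℤ)| < (p ^ (m + 1) : ℕ) := by
    rw [abs_zero]; exact_mod_cast Nat.pow_pos (by omega)
  refine ⟨fun τ hτ0 hτ => ?_, fun hne => ?_, fun heq => ?_⟩
  · rw [hcorr τ (by exact_mod_cast hτ), if_neg (abs_pos.mp hτ0)]
  · rw [hcorr 0 hpos, if_pos rfl, if_neg hne]
  · rw [hcorr 0 hpos, if_pos rfl, if_pos heq, pow_succ' _ (m + 1)]

/-- Remark 2 (CCC special case, `r = 0`, single path, `q = p`): the `p` codes
`C_α = [χ(F_0^α);…;χ(F_{p-1}^α)]`, `0 ≤ α < p`, form a `(p,p,p^n)`-CCC: all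
cross-correlation sums vanish for `0 < |τ| < p^n`; at `τ = 0` they vanish for
`α^1 ≠ α^2` and equal `p·p^n` for `α^1 = α^2`. -/
theorem stmt_13 (p n : ℕ) (hp : 2 ≤ p) (hn : 1 ≤ n)
    (π : Equiv.Perm (Fin n)) (γ : Fin n → ℕ) (hγ : ∀ i, γ i < p) (θ : ℕ) (hθ : θ < p) :
    ∀ α1 < p, ∀ α2 < p,
      (∀ τ : ℤ, 0 < |τ| → |τ| < (p ^ n : ℤ) →
        ∑ β ∈ Finset.range p,
          accs (p ^ n)
            (fun I => zeta p (Gval p n hn π γ θ α1 β I))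
            (fun I => zeta p (Gval p n hn π γ θ α2 β I)) τ = 0) ∧
      (α1 ≠ α2 →
        ∑ β ∈ Finset.range p,
          accs (p ^ n)
            (fun I => zeta p (Gval p n hn π γ θ α1 β I))
            (fun I => zeta p (Gval p n hn π γ θ α2 β I)) 0 = 0) ∧
      (α1 = α2 →
        ∑ β ∈ Finset.range p,
          accs (p ^ n)
            (fun I => zeta p (Gval p n hn π γ θ α1 β I))
            (fun I => zeta p (Gval p n hn π γ θ α2 β I)) 0 = (p : ℂ) * (p : ℂ) ^ n) :=
  stmt_13_general p n hn π γ θ
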